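/- arXiv:1302.4661 — 2 statements merged into one kernel-verified Lean document; each statement's English description precedes it below -/
import Mathlib

section
/- Let K and L be compact Hausdorff spaces and φ : K → L a continuous surjective map. If K has the extension property and L is scattered of finite height, then φ admits an averaging operator, i.e., there is a bounded linear operator P : C(K) → C(L) with P ∘ φ* = id on C(L); equivalently, the Banach subalgebra φ*C(L) of C(K) is complemented in C(K). -/
open Filter Topology
open scoped ZeroAtInfty

noncomputable section

/-- `E` is an extension operator for the closed set `F` in `K`. -/
def IsExtensionOperator {K : Type*} [TopologicalSpace K] (F : Set K)
    (E : C(↥F, ℝ) →L[ℝ] C(K, ℝ)) : Prop :=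
  ∀ f : C(↥F, ℝ), (E f).restrict F = f

/-- `F` admits an extension operator in `K`. -/
def HasExtensionOperator {K : Type*} [TopologicalSpace K] (F : Set K) : Prop :=
  ∃ E : C(↥F, ℝ) →L[ℝ] C(K, ℝ), IsExtensionOperator F E

/-- `K` has the extension property. -/
def HasExtensionProperty (K : Type*) [TopologicalSpace K] : Prop :=
  ∀ F : Set K, F.Nonempty → IsClosed F → HasExtensionOperator F

/-- `F` admits a regular extension operator in `K`. -/
def HasRegularExtensionOperator {K : Type*} [TopologicalSpace K] [CompactSpace K]
    (F : Set K) (hF : IsClosed F) : Prop :=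
  haveI : CompactSpace ↥F := isCompact_iff_compactSpace.mp hF.isCompact
  ∃ E : C(↥F, ℝ) →L[ℝ] C(K, ℝ), IsExtensionOperator F E ∧ ‖E‖ ≤ 1 ∧ E 1 = 1

/-- `K` has the regular extension property. -/
def HasRegularExtensionProperty (K : Type*) [TopologicalSpace K] [CompactSpace K] : Prop :=
  ∀ F : Set K, F.Nonempty → ∀ hF : IsClosed F, HasRegularExtensionOperator F hF

/-- The submodule `C(K|G)` of `C(K, ℝ)` of functions vanishing on `G`. -/
def vanishingSubmodule {K : Type*} [TopologicalSpace K] (G : Set K) :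
    Submodule ℝ C(K, ℝ) where
  carrier := {f | ∀ x ∈ G, f x = 0}
  add_mem' := by intro f g hf hg x hx; simp [hf x hx, hg x hx]
  zero_mem' := by intro x hx; simp
  smul_mem' := by intro c f hf x hx; simp [hf x hx]

/-- The canonical basis vector of `c₀(I)`: the characteristic function of `{i}`. -/
def c0Single {I : Type*} [TopologicalSpace I] [DiscreteTopology I] (i : I) : C₀(I, ℝ) :=
  letI := Classical.decEq I
  { toFun := fun j => if j = i then (1 : ℝ) else 0
    continuous_toFun := continuous_of_discreteTopology
    zero_at_infty' := by
      have h : (fun j => if j = i then (1 : ℝ) else 0) =ᶠ[Filter.cocompact I] (fun _ => 0) := by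
        filter_upwards [Filter.mem_cocompact.mpr ⟨{i}, isCompact_singleton, subset_rfl⟩] with j hj
        simp only [Set.mem_compl_iff, Set.mem_singleton_iff] at hj
        simp [hj]
      exact Filter.Tendsto.congr' h.symm tendsto_const_nhds }

/-- `X` satisfies the countable chain condition. -/
def CountableChainCondition (X : Type*) [TopologicalSpace X] : Prop :=
  ∀ 𝒰 : Set (Set X), (∀ U ∈ 𝒰, IsOpen U ∧ U.Nonempty) → 𝒰.Pairwise Disjoint → 𝒰.Countable


/-!
Induct down the Cantor–Bendixson derivatives `L⁽ᵏ⁾`, keeping a bounded operator `T` on `C(K)`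
that fixes `φ* C(L)` and whose values are constant on the fibres of `φ` over `L⁽ᵏ⁾`; for
`L⁽ⁿ⁾ = ∅` the identity will do. Given such a `T` for `L⁽ᵏ⁺¹⁾` and a section `s` of `φ`, the
function `T f ∘ s` is continuous on `L⁽ᵏ⁾`: at points of `L⁽ᵏ⁺¹⁾` because `φ` is a closed map
and `T f` is constant on their fibres, and at the other points because they are isolated in
`L⁽ᵏ⁾`. With an extension operator `E` for `φ⁻¹ L⁽ᵏ⁾`, the operator
`f ↦ T f + E ((T f ∘ s ∘ φ - T f)|φ⁻¹ L⁽ᵏ⁾)` then works for `L⁽ᵏ⁾`. At `k = 0`, `f ↦ T f ∘ s`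
is the averaging operator.
-/

section

open Function Set

namespace ContinuousMap

variable {X Y : Type*} [TopologicalSpace X] [TopologicalSpace Y]

def compRightCLM (θ : C(X, Y)) : C(Y, ℝ) →L[ℝ] C(X, ℝ) where
  toLinearMap := (compRightAlgHom ℝ ℝ θ).toLinearMap
  cont := compRightAlgHom_continuous ℝ ℝ θ

@[simp] lemma compRightCLM_apply (θ : C(X, Y)) (f : C(Y, ℝ)) : compRightCLM θ f = f.comp θ :=
  rfl

end ContinuousMap

open ContinuousMap

variable {K L : Type*} [TopologicalSpace K] [TopologicalSpace L]

lemma IsExtensionOperator.apply_of_mem {F : Set K} {E : C(F, ℝ) →L[ℝ] C(K, ℝ)}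
    (hE : IsExtensionOperator F E) (u : C(F, ℝ)) {x : K} (hx : x ∈ F) : E u x = u ⟨x, hx⟩ :=
  DFunLike.congr_fun (hE u) ⟨x, hx⟩

lemma HasExtensionProperty.hasExtensionOperator (hK : HasExtensionProperty K) {F : Set K}
    (hF : IsClosed F) : HasExtensionOperator F := by
  rcases F.eq_empty_or_nonempty with rfl | hne
  · exact ⟨0, fun f => ContinuousMap.ext fun ⟨_, hx⟩ => hx.elim⟩
  · exact hK F hne hF

lemma isClosed_iterate_derivedSet [T1Space L] (k : ℕ) :
    IsClosed (derivedSet^[k] (univ : Set L)) := by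
  cases k with
  | zero => exact isClosed_univ
  | succ k => rw [iterate_succ_apply']; exact isClosed_derivedSet _

def IsConstOnFibersOver {X : Type*} (φ : K → L) (S : Set L) (h : K → X) : Prop :=
  ∀ ⦃x x'⦄, φ x = φ x' → φ x ∈ S → h x = h x'

omit [TopologicalSpace K] [TopologicalSpace L] in
lemma IsConstOnFibersOver.mono {X : Type*} {φ : K → L} {S S' : Set L} {h : K → X}
    (hh : IsConstOnFibersOver φ S' h) (hS : S ⊆ S') : IsConstOnFibersOver φ S h :=
  fun _ _ hxx' hx => hh hxx' (hS hx)

section Descent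

variable {X : Type*} [TopologicalSpace X] {φ : K → L} {s : L → K}

/-- As `φ` is closed, every open set containing the fibre over `y` contains the fibres over a
neighbourhood of `y`. -/
lemma continuousAt_comp_rightInverse (hφ : IsClosedMap φ) (hs : RightInverse s φ) {h : K → X}
    (hh : Continuous h) {y : L} (hy : ∀ x, φ x = y → h x = h (s y)) :
    ContinuousAt (h ∘ s) y := by
  refine tendsto_nhds.mpr fun U hUo hyU => ?_
  have hker : kernImage φ (h ⁻¹' U) ∈ 𝓝 y :=
    (isClosedMap_iff_kernImage.mp hφ (hUo.preimage hh)).mem_nhds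
      fun x hx => by rw [mem_preimage, hy x hx]; exact hyU
  exact mem_of_superset hker fun y' hy' => hy' (hs y')

lemma continuousOn_comp_rightInverse (hφ : IsClosedMap φ) (hs : RightInverse s φ) {h : K → X}
    (hh : Continuous h) {S : Set L} (hS : IsConstOnFibersOver φ (derivedSet S) h) :
    ContinuousOn (h ∘ s) S := by
  intro y _
  by_cases hy : y ∈ derivedSet S
  · refine (continuousAt_comp_rightInverse hφ hs hh fun x hx => hS (hx.trans (hs y).symm) ?_)
      |>.continuousWithinAt
    rwa [hx]
  · exact continuousWithinAt_of_not_accPt hy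

variable [CompactSpace K]

lemma exists_clm_comp_rightInverse (hφ : IsClosedMap φ) (hs : RightInverse s φ) (S : Set L)
    [CompactSpace S] (T : C(K, ℝ) →L[ℝ] C(K, ℝ))
    (hT : ∀ f, IsConstOnFibersOver φ (derivedSet S) (T f)) :
    ∃ D : C(K, ℝ) →L[ℝ] C(S, ℝ), ∀ f (y : S), D f y = T f (s y) := by
  let D : C(K, ℝ) →ₗ[ℝ] C(S, ℝ) :=
    { toFun := fun f =>
        ⟨fun y => T f (s y), continuousOn_iff_continuous_domRestrict.mp
          (continuousOn_comp_rightInverse hφ hs (T f).continuous (hT f))⟩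
      map_add' := fun f g => by ext; simp only [map_add]; rfl
      map_smul' := fun c f => by ext; simp only [map_smul]; rfl }
  refine ⟨D.mkContinuous ‖T‖ fun f => ?_, fun f y => rfl⟩
  refine (ContinuousMap.norm_le _ (by positivity)).mpr fun y => ?_
  exact ((T f).norm_coe_le_norm (s y)).trans (T.le_opNorm f)

end Descent

/-- At `S = univ` this says that `T` is a projection of `C(K)` onto `φ* C(L)`. -/
def IsAveragingOver (φ : C(K, L)) (S : Set L) (T : C(K, ℝ) →L[ℝ] C(K, ℝ)) : Prop :=
  (∀ g : C(L, ℝ), T (g.comp φ) = g.comp φ) ∧ ∀ f, IsConstOnFibersOver φ S (T f)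

variable [CompactSpace K] [CompactSpace L] [T2Space L] {φ : C(K, L)}

lemma IsAveragingOver.of_derivedSet (hK : HasExtensionProperty K) (hφ : Surjective φ)
    {S : Set L} (hS : IsClosed S) {T : C(K, ℝ) →L[ℝ] C(K, ℝ)}
    (hT : IsAveragingOver φ (derivedSet S) T) : ∃ T', IsAveragingOver φ S T' := by
  have : CompactSpace S := isCompact_iff_compactSpace.mp hS.isCompact
  obtain ⟨s, hs⟩ := hφ.hasRightInverse
  obtain ⟨D, hD⟩ := exists_clm_comp_rightInverse φ.continuous.isClosedMap hs S T hT.2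
  obtain ⟨E, hE⟩ := hK.hasExtensionOperator (hS.preimage φ.continuous)
  let ι : C(φ ⁻¹' S, K) := ⟨Subtype.val, continuous_subtype_val⟩
  let T' := T + E ∘L (compRightCLM (φ.restrictPreimage S) ∘L D - compRightCLM ι ∘L T)
  have hT'_apply (f : C(K, ℝ)) {x : K} (hx : φ x ∈ S) : T' f x = T f (s (φ x)) := by
    simp [T', hE.apply_of_mem _ hx, hD, ι]
  refine ⟨T', fun g => ?_, fun f x x' hxx' hx => ?_⟩
  · have hDg : (D (g.comp φ)).comp (φ.restrictPreimage S) = (T (g.comp φ)).comp ι := by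
      ext x
      simp [hD, hT.1, hs _, ι]
    simp [T', hDg, hT.1]
  · rw [hT'_apply f hx, hT'_apply f (hxx' ▸ hx), hxx']

lemma IsAveragingOver.exists_averagingOperator (hφ : Surjective φ) {T : C(K, ℝ) →L[ℝ] C(K, ℝ)}
    (hT : IsAveragingOver φ univ T) :
    ∃ P : C(K, ℝ) →L[ℝ] C(L, ℝ), ∀ g : C(L, ℝ), P (g.comp φ) = g := by
  have : CompactSpace (univ : Set L) := isCompact_iff_compactSpace.mp isCompact_univ
  obtain ⟨s, hs⟩ := hφ.hasRightInverse
  obtain ⟨D, hD⟩ := exists_clm_comp_rightInverse φ.continuous.isClosedMap hs univ T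
    fun f => (hT.2 f).mono (subset_univ _)
  refine ⟨compRightCLM (Homeomorph.Set.univ L).symm ∘L D, fun g => ?_⟩
  ext y
  simp [hD, hT.1, hs y]

end

theorem stmt3_general {K L : Type*} [TopologicalSpace K] [CompactSpace K]
    [TopologicalSpace L] [CompactSpace L] [T2Space L]
    (φ : C(K, L)) (hφ : Function.Surjective φ)
    (hK : HasExtensionProperty K)
    (hL : ∃ n : ℕ, derivedSet^[n] (Set.univ : Set L) = ∅) :
    ∃ P : C(K, ℝ) →L[ℝ] C(L, ℝ), ∀ f : C(L, ℝ), P (f.comp φ) = f := by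
  obtain ⟨n, hn⟩ := hL
  have hT : ∀ k ≤ n, ∃ T, IsAveragingOver φ (derivedSet^[k] Set.univ) T := by
    intro k hk
    induction hk using Nat.decreasingInduction with
    | self => exact ⟨ContinuousLinearMap.id ℝ _, fun g => rfl, fun f x x' _ hx => (hn ▸ hx).elim⟩
    | of_succ k _ ih =>
      obtain ⟨T, hT⟩ := ih
      rw [Function.iterate_succ_apply'] at hT
      exact hT.of_derivedSet hK hφ (isClosed_iterate_derivedSet k)
  obtain ⟨T, hT⟩ := hT 0 n.zero_le
  exact hT.exists_averagingOperator hφ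

theorem stmt3 {K L : Type*} [TopologicalSpace K] [CompactSpace K] [T2Space K]
    [TopologicalSpace L] [CompactSpace L] [T2Space L]
    (φ : C(K, L)) (hφ : Function.Surjective φ)
    (hK : HasExtensionProperty K)
    (hL : ∃ n : ℕ, derivedSet^[n] (Set.univ : Set L) = ∅) :
    ∃ P : C(K, ℝ) →L[ℝ] C(L, ℝ), ∀ f : C(L, ℝ), P (f.comp φ) = f :=
  stmt3_general φ hφ hK hL
end
end

section
/- If K is a compact Hausdorff space having the extension property, then every isometric copy of c0(I) in C(K) is complemented; that is, for every index set I and every linear isometric embedding S : c0(I) → C(K), the range of S is complemented in C(K). -/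
open Filter Topology
open scoped ZeroAtInfty

noncomputable section

/-! Put `f i = S (c0Single i)` and pick `x i` with `|f i (x i)| = 1`. A functional of norm `≤ 1`
on `c₀(I)` taking the value `±1` at `c0Single i` is `±` the `i`-th coordinate, so
`S a (x i) = σ i * a i` with `σ i = ±1`; in particular `f j (x i) = 0` for `j ≠ i`. Let `L` be the
closure of `{x i}` minus the open sets `{|f j| > 1/2}`: it is closed, every `S a` vanishes on it,
and a continuous `g` vanishing on `L` has `g (x i) → 0` by compactness. With an extension
operator `E` for `L`, `h ↦ (σ i * (h - E (h|L)) (x i))ᵢ` is a bounded left inverse of `S`. -/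

namespace ZeroAtInftyContinuousMap

variable {α β : Type*} [TopologicalSpace α] [SeminormedAddCommGroup β]

theorem norm_coe_le_norm (f : C₀(α, β)) (x : α) : ‖f x‖ ≤ ‖f‖ := by
  rw [← norm_toBCF_eq_norm]
  exact f.toBCF.norm_coe_le_norm x

theorem norm_le (f : C₀(α, β)) {C : ℝ} (hC : 0 ≤ C) : ‖f‖ ≤ C ↔ ∀ x, ‖f x‖ ≤ C := by
  rw [← norm_toBCF_eq_norm]
  exact BoundedContinuousFunction.norm_le hC

end ZeroAtInftyContinuousMap

section c0

variable {I : Type*} [TopologicalSpace I] [DiscreteTopology I]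

theorem c0Single_apply_self (i : I) : c0Single i i = 1 := by
  simp [c0Single]

theorem c0Single_apply_of_ne {i j : I} (h : j ≠ i) : c0Single i j = 0 := by
  simp [c0Single, h]

theorem norm_c0Single (i : I) : ‖c0Single i‖ = 1 := by
  refine le_antisymm ((ZeroAtInftyContinuousMap.norm_le _ zero_le_one).2 fun j => ?_) ?_
  · obtain rfl | h := eq_or_ne j i
    · simp [c0Single_apply_self]
    · simp [c0Single_apply_of_ne h]
  · simpa [c0Single_apply_self] using (c0Single i).norm_coe_le_norm i

theorem eq_mul_apply_of_abs_apply_c0Single_eq_one (φ : C₀(I, ℝ) →ₗ[ℝ] ℝ)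
    (hφ : ∀ a, |φ a| ≤ ‖a‖) {i : I} (hi : |φ (c0Single i)| = 1) (a : C₀(I, ℝ)) :
    φ a = φ (c0Single i) * a i := by
  set σ := φ (c0Single i)
  set b := a - a i • c0Single i
  have hbi : b i = 0 := by simp [b, c0Single_apply_self]
  -- Since `b i = 0`, `‖b + t • c0Single i‖ = max ‖b‖ |t|`; taking `t = ±‖b‖` forces `φ b = 0`.
  have key : ∀ t : ℝ, |φ b + t| ≤ max ‖b‖ |t| := by
    intro t
    have : φ (b + (σ * t) • c0Single i) = φ b + t := by
      rw [map_add, map_smul, smul_eq_mul, mul_comm σ, mul_assoc, ← sq, ← sq_abs, hi]; ring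
    rw [← this]
    refine (hφ _).trans ((ZeroAtInftyContinuousMap.norm_le _ (by positivity)).2 fun j => ?_)
    obtain rfl | h := eq_or_ne j i
    · simp [hbi, c0Single_apply_self, hi]
    · exact le_max_of_le_left (by simpa [c0Single_apply_of_ne h] using b.norm_coe_le_norm j)
  have h₁ := key ‖b‖
  have h₂ := key (-‖b‖)
  simp only [abs_neg, abs_norm, max_self] at h₁ h₂
  have : φ b = 0 := by
    rcases abs_le.1 h₁ with ⟨-, h₁⟩; rcases abs_le.1 h₂ with ⟨h₂, -⟩; linarith
  calc φ a = φ (b + a i • c0Single i) := by simp [b]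
    _ = σ * a i := by rw [map_add, map_smul, this, smul_eq_mul, zero_add, mul_comm]

end c0

section ClosureRange

variable {K ι E : Type*} [TopologicalSpace K] [NormedAddCommGroup E]

theorem tendsto_comp_cofinite_of_eq_zero_on_closure_range_diff [CompactSpace K] {x : ι → K}
    {U : ι → Set K} (hU : ∀ j, IsOpen (U j)) (hxU : ∀ i j, x i ∈ U j → j = i) {g : K → E}
    (hg : Continuous g) (hgL : ∀ y ∈ closure (Set.range x) \ ⋃ j, U j, g y = 0) :
    Tendsto (g ∘ x) cofinite (𝓝 0) := by
  refine tendsto_zero_iff_norm_tendsto_zero.2 <| Metric.tendsto_nhds.2 fun ε hε => ?_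
  set C := closure (Set.range x) ∩ {y | ε ≤ ‖g y‖}
  have hC : IsCompact C :=
    (isClosed_closure.inter (isClosed_le continuous_const hg.norm)).isCompact
  have hCU : C ⊆ ⋃ j, U j := fun y hy => by
    by_contra hyU
    have : ε ≤ ‖g y‖ := hy.2
    rw [hgL y ⟨hy.1, hyU⟩, norm_zero] at this
    exact this.not_gt hε
  obtain ⟨J, hJ⟩ := hC.elim_finite_subcover U hU hCU
  refine eventually_cofinite.2 <| J.finite_toSet.subset fun i hi => ?_
  have hxi : x i ∈ C := ⟨subset_closure ⟨i, rfl⟩, by simpa using hi⟩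
  obtain ⟨j, hj, hxj⟩ := Set.mem_iUnion₂.1 (hJ hxi)
  rwa [← hxU i j hxj]

theorem eq_zero_of_mem_closure_range_of_tendsto [T1Space K] {x : ι → K} {g : K → E}
    (hg : Continuous g) (hx : Tendsto (g ∘ x) cofinite (𝓝 0)) {y : K}
    (hy : y ∈ closure (Set.range x)) (hy' : y ∉ Set.range x) : g y = 0 := by
  refine norm_le_zero_iff.1 <| le_of_forall_pos_le_add fun ε hε => ?_
  set F := {i | ¬ ‖g (x i)‖ ≤ ε}
  have hF : F.Finite := eventually_cofinite.1 (hx.norm.eventually (ge_mem_nhds (by simpa)))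
  have hsplit : Set.range x ⊆ x '' F ∪ x '' Fᶜ := by
    rintro _ ⟨i, rfl⟩
    by_cases hi : i ∈ F
    exacts [Or.inl ⟨i, hi, rfl⟩, Or.inr ⟨i, hi, rfl⟩]
  have hyFc : y ∈ closure (x '' Fᶜ) := by
    have := closure_mono hsplit hy
    rw [closure_union, (hF.image x).isClosed.closure_eq] at this
    exact this.resolve_left fun ⟨i, _, hi⟩ => hy' ⟨i, hi⟩
  have hle : closure (x '' Fᶜ) ⊆ {z | ‖g z‖ ≤ ε} :=
    closure_minimal (by rintro _ ⟨i, hi, rfl⟩; simpa [F] using hi)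
      (isClosed_le hg.norm continuous_const)
  simpa using hle hyFc

end ClosureRange

theorem ContinuousMap.exists_norm_apply_eq_norm {K E : Type*} [TopologicalSpace K]
    [CompactSpace K] [Nonempty K] [NormedAddCommGroup E] (f : C(K, E)) :
    ∃ z, ‖f z‖ = ‖f‖ := by
  obtain ⟨z, -, hz⟩ :=
    isCompact_univ.exists_isMaxOn Set.univ_nonempty f.continuous.norm.continuousOn
  exact ⟨z, le_antisymm (f.norm_coe_le_norm z)
    ((f.norm_le (norm_nonneg _)).2 fun y => hz (Set.mem_univ y))⟩

theorem ContinuousMap.norm_evalCLM_le {K E : Type*} [TopologicalSpace K] [CompactSpace K]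
    [NormedAddCommGroup E] [NormedSpace ℝ E] (z : K) : ‖ContinuousMap.evalCLM ℝ (M := E) z‖ ≤ 1 :=
  ContinuousLinearMap.opNorm_le_bound _ zero_le_one fun f => by simpa using f.norm_coe_le_norm z

theorem IsExtensionOperator.closedComplemented_vanishingSubmodule {K : Type*}
    [TopologicalSpace K] {L : Set K} {E : C(L, ℝ) →L[ℝ] C(K, ℝ)} (hE : IsExtensionOperator L E) :
    (vanishingSubmodule L).ClosedComplemented := by
  let ρ := ContinuousMap.compCLM ℝ ℝ (ContinuousMap.restrict L (ContinuousMap.id K))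
  have hρ : ∀ h, ρ h = h.restrict L := fun _ => rfl
  let P := ContinuousLinearMap.id ℝ C(K, ℝ) - E.comp ρ
  refine ⟨P.codRestrict _ fun h y hy => ?_, fun ⟨g, hg⟩ => Subtype.ext ?_⟩
  · have : E (h.restrict L) y = h y := congr($(hE (h.restrict L)) ⟨y, hy⟩)
    change h y - E (ρ h) y = 0
    rw [hρ, this, sub_self]
  · have hg0 : g.restrict L = 0 := ContinuousMap.ext fun y => hg y y.2
    change g - E (ρ g) = g
    rw [hρ, hg0, map_zero, sub_zero]

theorem HasExtensionProperty.exists_isExtensionOperator {K : Type*} [TopologicalSpace K]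
    (hK : HasExtensionProperty K) {L : Set K} (hL : IsClosed L) :
    ∃ E : C(L, ℝ) →L[ℝ] C(K, ℝ), IsExtensionOperator L E := by
  obtain rfl | hne := L.eq_empty_or_nonempty
  · exact ⟨0, fun f => ContinuousMap.ext fun ⟨_, h⟩ => h.elim⟩
  · exact hK L hne hL

theorem exists_continuousLinearMap_c0_of_tendsto {X I : Type*} [NormedAddCommGroup X]
    [NormedSpace ℝ X] [TopologicalSpace I] [DiscreteTopology I] (ψ : I → X →L[ℝ] ℝ) {M : ℝ}
    (hM : ∀ i, ‖ψ i‖ ≤ M) (hψ : ∀ h, Tendsto (fun i => ψ i h) cofinite (𝓝 0)) :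
    ∃ R : X →L[ℝ] C₀(I, ℝ), ∀ h i, R h i = ψ i h := by
  let Rₗ : X →ₗ[ℝ] C₀(I, ℝ) :=
    { toFun h := ⟨⟨fun i => ψ i h, continuous_of_discreteTopology⟩, by
        rw [cocompact_eq_cofinite]; exact hψ h⟩
      map_add' _ _ := by ext; simp
      map_smul' _ _ := by ext; simp }
  refine ⟨Rₗ.mkContinuousOfExistsBound ⟨max M 0, fun h => ?_⟩, fun _ _ => rfl⟩
  refine ((Rₗ h).norm_le (by positivity)).2 fun i => ?_
  calc ‖ψ i h‖ ≤ ‖ψ i‖ * ‖h‖ := (ψ i).le_opNorm h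
    _ ≤ max M 0 * ‖h‖ := by gcongr; exact (hM i).trans (le_max_left _ _)

namespace LinearIsometry

variable {I K : Type*} [TopologicalSpace I] [DiscreteTopology I] [TopologicalSpace K]
  [CompactSpace K] (S : C₀(I, ℝ) →ₗᵢ[ℝ] C(K, ℝ))

theorem exists_abs_apply_c0Single_eq_one (i : I) : ∃ z, |S (c0Single i) z| = 1 := by
  have hnorm : ‖S (c0Single i)‖ = 1 := by rw [S.norm_map, norm_c0Single]
  obtain ⟨z, -⟩ : ∃ z, S (c0Single i) z ≠ 0 := by
    by_contra! h
    simp [show S (c0Single i) = 0 from ContinuousMap.ext h] at hnorm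
  have : Nonempty K := ⟨z⟩
  simpa [hnorm] using (S (c0Single i)).exists_norm_apply_eq_norm

theorem apply_eq_mul_of_abs_apply_c0Single_eq_one {i : I} {z : K}
    (hz : |S (c0Single i) z| = 1) (a : C₀(I, ℝ)) : S a z = S (c0Single i) z * a i :=
  eq_mul_apply_of_abs_apply_c0Single_eq_one
    ((ContinuousMap.evalCLM ℝ z).toLinearMap ∘ₗ S.toLinearMap)
    (fun a => by simpa [S.norm_map] using (S a).norm_coe_le_norm z) hz a

end LinearIsometry

section Sampling

variable {I K : Type*} [TopologicalSpace I] [DiscreteTopology I] [TopologicalSpace K]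
  [CompactSpace K] {x : I → K} {σ : I → ℝ}

theorem exists_isClosed_vanishingSubmodule_of_apply_eq_mul [T1Space K]
    {S : C₀(I, ℝ) → C(K, ℝ)} (hσ : ∀ i, |σ i| = 1) (hSx : ∀ a i, S a (x i) = σ i * a i) :
    ∃ L : Set K, IsClosed L ∧ (∀ a, S a ∈ vanishingSubmodule L) ∧
      ∀ g ∈ vanishingSubmodule L, Tendsto (g ∘ x) cofinite (𝓝 0) := by
  set U : I → Set K := fun j => {z | 1 / 2 < |S (c0Single j) z|}
  have hU : ∀ j, IsOpen (U j) := fun j => isOpen_lt continuous_const (S _).continuous.abs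
  have hxU : ∀ i j, x i ∈ U j → j = i := fun i j hij => by
    by_contra hji
    have : 1 / 2 < |S (c0Single j) (x i)| := hij
    rw [hSx, c0Single_apply_of_ne (Ne.symm hji)] at this
    norm_num at this
  have hσb : IsBoundedUnder (· ≤ ·) cofinite (norm ∘ σ) :=
    isBoundedUnder_of ⟨1, fun i => (hσ i).le⟩
  have hSxa : ∀ a, Tendsto (S a ∘ x) cofinite (𝓝 0) := fun a => by
    simpa only [Function.comp_def, hSx] using
      isBoundedUnder_le_mul_tendsto_zero hσb (cocompact_eq_cofinite I ▸ zero_at_infty a)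
  refine ⟨closure (Set.range x) \ ⋃ j, U j, isClosed_closure.sdiff (isOpen_iUnion hU),
    fun a y hy => ?_, fun g hg => tendsto_comp_cofinite_of_eq_zero_on_closure_range_diff hU hxU
      g.continuous hg⟩
  refine eq_zero_of_mem_closure_range_of_tendsto (S a).continuous (hSxa a) hy.1 ?_
  rintro ⟨i, rfl⟩
  exact hy.2 (Set.mem_iUnion.2 ⟨i, by norm_num [U, hSx, c0Single_apply_self, hσ i]⟩)

theorem exists_continuousLinearMap_c0_eq_mul_apply {L : Set K}
    (hL : (vanishingSubmodule L).ClosedComplemented) (hσ : ∀ i, |σ i| ≤ 1)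
    (hLx : ∀ g ∈ vanishingSubmodule L, Tendsto (g ∘ x) cofinite (𝓝 0)) :
    ∃ R : C(K, ℝ) →L[ℝ] C₀(I, ℝ), ∀ g ∈ vanishingSubmodule L, ∀ i, R g i = σ i * g (x i) := by
  obtain ⟨P, hP⟩ := hL
  set Q := (vanishingSubmodule L).subtypeL.comp P
  set ψ := fun i => σ i • (ContinuousMap.evalCLM ℝ (x i)).comp Q
  have hψ : ∀ i, ‖ψ i‖ ≤ ‖Q‖ := fun i =>
    calc ‖ψ i‖ ≤ ‖σ i‖ * ‖(ContinuousMap.evalCLM ℝ (x i)).comp Q‖ :=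
          ContinuousLinearMap.opNorm_smul_le _ _
      _ ≤ ‖(ContinuousMap.evalCLM ℝ (x i)).comp Q‖ :=
          mul_le_of_le_one_left (ContinuousLinearMap.opNorm_nonneg _) (hσ i)
      _ ≤ ‖ContinuousMap.evalCLM ℝ (M := ℝ) (x i)‖ * ‖Q‖ := ContinuousLinearMap.opNorm_comp_le _ _
      _ ≤ ‖Q‖ := mul_le_of_le_one_left Q.opNorm_nonneg (ContinuousMap.norm_evalCLM_le _)
  have hψ0 : ∀ h, Tendsto (fun i => ψ i h) cofinite (𝓝 0) := fun h =>
    isBoundedUnder_le_mul_tendsto_zero (isBoundedUnder_of ⟨1, hσ⟩) (hLx _ (P h).2)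
  obtain ⟨R, hR⟩ := exists_continuousLinearMap_c0_of_tendsto ψ hψ hψ0
  refine ⟨R, fun g hg i => ?_⟩
  have hQ : Q g = g := congr_arg Subtype.val (hP ⟨g, hg⟩)
  calc R g i = σ i * Q g (x i) := hR g i
    _ = σ i * g (x i) := by rw [hQ]

end Sampling

theorem stmt4 {K : Type*} [TopologicalSpace K] [CompactSpace K] [T2Space K]
    (hK : HasExtensionProperty K)
    {I : Type*} [TopologicalSpace I] [DiscreteTopology I]
    (S : C₀(I, ℝ) →ₗᵢ[ℝ] C(K, ℝ)) :
    (LinearMap.range S.toLinearMap).ClosedComplemented := by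
  choose x hx using S.exists_abs_apply_c0Single_eq_one
  set σ := fun i => S (c0Single i) (x i)
  have hSx : ∀ a i, S a (x i) = σ i * a i := fun a i =>
    S.apply_eq_mul_of_abs_apply_c0Single_eq_one (hx i) a
  obtain ⟨L, hL, hSL, hLx⟩ := exists_isClosed_vanishingSubmodule_of_apply_eq_mul hx hSx
  obtain ⟨E, hE⟩ := hK.exists_isExtensionOperator hL
  obtain ⟨R, hR⟩ := exists_continuousLinearMap_c0_eq_mul_apply
    hE.closedComplemented_vanishingSubmodule (fun i => (hx i).le) hLx
  refine ContinuousLinearMap.HasLeftInverse.closedComplemented_range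
    (f := S.toContinuousLinearMap) ⟨R, fun a => ?_⟩
  ext i
  have hσ : σ i * σ i = 1 := by rw [← abs_mul_abs_self, hx i, one_mul]
  calc R (S a) i = σ i * S a (x i) := hR _ (hSL a) i
    _ = a i := by rw [hSx a i, ← mul_assoc, hσ, one_mul]
end
end
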